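/- Let X_1,…,X_n be drawn from a product distribution on 𝒳^n and let M be a k-pass streaming algorithm with private randomness R. Then for all i ∈ {1,…,k} and all j, ℓ ∈ [n] with j ≥ ℓ: (1) I(X_{[ℓ,j]}, R_{(≤k,[ℓ,j])}; X_{[1,ℓ-1]}, R_{(≤k,[1,ℓ-1])}, X_{[j+1,n]}, R_{(≤k,[j+1,n])} | M_{(≤i,ℓ-1)}, M_{(≤i-1,j)}) = 0; and (2) I(X_{[ℓ,j]}, R_{(≤k,[ℓ,j])}; X_{[1,ℓ-1]}, R_{(≤k,[1,ℓ-1])}, X_{[j+1,n]}, R_{(≤k,[j+1,n])} | M_{(≤i,ℓ-1)}, M_{(≤i,j)}) = 0. -/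

import Mathlib

open scoped Classical
open Finset

noncomputable section

namespace MultiPassIC

/-- Probability of an event under a probability mass function `p` on a finite sample space. -/
def pr {Ω : Type} [Fintype Ω] (p : Ω → ℝ) (E : Ω → Prop) : ℝ :=
  ∑ ω, if E ω then p ω else 0

/-- `p` is a probability mass function on the finite type `Ω`. -/
structure IsPMF {Ω : Type} [Fintype Ω] (p : Ω → ℝ) : Prop where
  nonneg : ∀ ω, 0 ≤ p ω
  sum_one : ∑ ω, p ω = 1

/-- Shannon entropy (base 2) of the random variable `A` under `p`. -/
def H {Ω : Type} [Fintype Ω] {α : Type} [Fintype α] (p : Ω → ℝ) (A : Ω → α) : ℝ :=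
  -∑ a, pr p (fun ω => A ω = a) * Real.logb 2 (pr p (fun ω => A ω = a))

/-- Conditional mutual information `I(A ; B ∣ C)` (base 2), with the usual conventions
for vanishing probabilities. -/
def condMI {Ω : Type} [Fintype Ω] {α β γ : Type} [Fintype α] [Fintype β] [Fintype γ]
    (p : Ω → ℝ) (A : Ω → α) (B : Ω → β) (C : Ω → γ) : ℝ :=
  ∑ a, ∑ b, ∑ c,
    pr p (fun ω => A ω = a ∧ B ω = b ∧ C ω = c) *
      Real.logb 2 ((pr p (fun ω => C ω = c) *
          pr p (fun ω => A ω = a ∧ B ω = b ∧ C ω = c)) /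
        (pr p (fun ω => A ω = a ∧ C ω = c) * pr p (fun ω => B ω = b ∧ C ω = c)))

/-- Mutual information `I(A ; B)` (base 2). -/
def MI {Ω : Type} [Fintype Ω] {α β : Type} [Fintype α] [Fintype β]
    (p : Ω → ℝ) (A : Ω → α) (B : Ω → β) : ℝ :=
  condMI p A B (fun _ => (0 : Fin 1))

/-- `X 0, …, X (n-1)` (the first `n` stream elements) are mutually independent under `p`,
i.e. they are drawn from a product distribution. -/
def IsProduct {Ω : Type} [Fintype Ω] {𝒳 : Type} (p : Ω → ℝ) (n : ℕ) (X : ℕ → Ω → 𝒳) : Prop :=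
  ∀ x : ℕ → 𝒳,
    pr p (fun ω => ∀ j < n, X j ω = x j) =
      ∏ j ∈ Finset.range n, pr p (fun ω => X j ω = x j)

/-- A `k`-pass streaming algorithm on the input stream `X 0, …, X (n-1)` (0-indexed;
the paper's `X_j` is `X (j-1)`), over a finite sample space `Ω` with pmf `p`.
`S` is the finite set of memory states, `Rv` the value space of the per-step private
randomness, `init` the initial memory state `M₀`, `R i j` the private randomness used at
step `j` of pass `i` (0-indexed), and `f i j` the corresponding transition function.
The field `indep` states that the initial state, all the per-step random seeds, and the
input stream are mutually independent. -/
structure Alg (Ω : Type) [Fintype Ω] (p : Ω → ℝ) (𝒳 : Type) [Fintype 𝒳]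
    (n k : ℕ) (X : ℕ → Ω → 𝒳) where
  S : Type
  fintS : Fintype S
  Rv : Type
  fintR : Fintype Rv
  init : Ω → S
  R : ℕ → ℕ → Ω → Rv
  f : ℕ → ℕ → 𝒳 → S → Rv → S
  indep : ∀ (m : S) (r : ℕ → ℕ → Rv) (x : ℕ → 𝒳),
    pr p (fun ω => init ω = m ∧ (∀ i < k, ∀ j < n, R i j ω = r i j) ∧ (∀ j < n, X j ω = x j))
      = pr p (fun ω => init ω = m)
        * (∏ i ∈ Finset.range k, ∏ j ∈ Finset.range n, pr p (fun ω => R i j ω = r i j))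
        * pr p (fun ω => ∀ j < n, X j ω = x j)

attribute [instance] Alg.fintS Alg.fintR

variable {Ω : Type} [Fintype Ω] {p : Ω → ℝ} {𝒳 : Type} [Fintype 𝒳] {n k : ℕ} {X : ℕ → Ω → 𝒳}

/-- Running pass `i` (0-indexed) of the algorithm for `j` steps starting from `ini`. -/
def Alg.runPass (M : Alg Ω p 𝒳 n k X) (i : ℕ) (ini : Ω → M.S) : ℕ → Ω → M.S
  | 0 => ini
  | j + 1 => fun ω =>
      if j < n ∧ i < k then
        M.f i j (X j ω) (M.runPass i ini j ω) (M.R i j ω)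
      else M.runPass i ini j ω

/-- `M.passEnd i` is the memory state at the end of pass `i`; `M.passEnd 0 = M₀` is the
initial state, and `M.passEnd i` is the paper's `M_i = M_{(i,n)}`. -/
def Alg.passEnd (M : Alg Ω p 𝒳 n k X) : ℕ → Ω → M.S
  | 0 => M.init
  | i + 1 => M.runPass i (M.passEnd i) n

/-- `M.st i j` is the memory state after reading `j` elements in pass `i+1`;
it is the paper's `M_{(i+1, j)}`. -/
def Alg.st (M : Alg Ω p 𝒳 n k X) (i j : ℕ) : Ω → M.S :=
  M.runPass i (M.passEnd i) j

/-- The multi-pass information cost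
`MIC(M, μ) = Σ_{i=1}^{k} Σ_{j=1}^{n} Σ_{ℓ=1}^{j} I(M_{(i,j)}; X_ℓ | M_{(≤i,ℓ-1)}, M_{(≤i-1,j)})
  + Σ_{i=1}^{k} Σ_{j=1}^{n} Σ_{ℓ=j+1}^{n} I(M_{(i,j)}; X_ℓ | M_{(≤i-1,ℓ-1)}, M_{(≤i-1,j)})`
(all summation indices below are 0-indexed shifts of the paper's 1-indexed ones). -/
def Alg.MIC (M : Alg Ω p 𝒳 n k X) : ℝ :=
  (∑ i ∈ Finset.range k, ∑ j ∈ Finset.range n, ∑ l ∈ Finset.range (j + 1),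
    condMI p (M.st i (j + 1)) (X l)
      (fun ω => ((fun r : Fin (i + 1) => M.st r.1 l ω),
                 (fun r : Fin i => M.st r.1 (j + 1) ω))))
  + (∑ i ∈ Finset.range k, ∑ j ∈ Finset.range n, ∑ l ∈ Finset.Ico (j + 1) n,
    condMI p (M.st i (j + 1)) (X l)
      (fun ω => ((fun r : Fin i => M.st r.1 l ω),
                 (fun r : Fin i => M.st r.1 (j + 1) ω))))

/-- The conditional information cost
`MIC_cond(M, μ) = Σ_{j=1}^{n} Σ_{ℓ=1}^{j} I(M_{(≤k,j)}; X_ℓ | M_{<k}, M_{(≤k,ℓ-1)})`. -/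
def Alg.MICcond (M : Alg Ω p 𝒳 n k X) : ℝ :=
  ∑ j ∈ Finset.range n, ∑ l ∈ Finset.range (j + 1),
    condMI p (fun ω => fun r : Fin k => M.st r.1 (j + 1) ω) (X l)
      (fun ω => ((fun r : Fin k => M.passEnd r.1 ω),
                 (fun r : Fin k => M.st r.1 l ω)))

end MultiPassIC

/-!
Condition on the memory states at columns `l` and `j + 1` of the first passes. Each pass splits
into three segments: the columns before `l`, the block `l, …, j`, and the columns after `j`; only
the middle segment reads the block's inputs and seeds. Hence the event that the conditioned states
take given values is the intersection of an event determined by the block data (every middle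
segment carries the state at `l` to the state at `j + 1`) and one determined by the outer data and
the initial state (every pass, started from the state reconstructed from the previous pass's state
at `j + 1`, reaches the state at `l`). As the block data is independent of the outer data and the
initial state, the joint law of block data, outer data and conditioning factors as
`f (block, c) * g (outer, c)`, and such a factorization makes the conditional mutual information
vanish.
-/

namespace MultiPassIC

section Probability

variable {Ω : Type} [Fintype Ω] {p : Ω → ℝ}

lemma pr_nonneg (hp : ∀ ω, 0 ≤ p ω) (E : Ω → Prop) : 0 ≤ pr p E :=
  Finset.sum_nonneg fun ω _ => by split <;> simp [hp ω]

lemma pr_congr {E F : Ω → Prop} (h : ∀ ω, E ω ↔ F ω) : pr p E = pr p F := by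
  simp only [pr, h]

lemma pr_and_const (E : Ω → Prop) (c : Prop) :
    pr p (fun ω => E ω ∧ c) = (if c then 1 else 0) * pr p E := by
  by_cases hc : c <;> simp [hc, pr]

lemma pr_eq_sum_pr_and_eq {V : Type} [Fintype V] (E : Ω → Prop) (f : Ω → V) :
    pr p E = ∑ v, pr p (fun ω => E ω ∧ f ω = v) := by
  simp only [pr]
  rw [Finset.sum_comm]
  refine Finset.sum_congr rfl fun ω _ => ?_
  by_cases hE : E ω <;> simp [hE]

lemma pr_eq_zero_of_forall_not {E : Ω → Prop} (h : ∀ ω, ¬E ω) : pr p E = 0 := by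
  simp [pr, h]

lemma exists_factor_of_witness {α υ : Type} (A : Ω → α) (U : Ω → υ) (G H : Ω → ℝ)
    (hG : ∀ ω, 0 ≤ G ω) (hH : ∀ ω, 0 ≤ H ω)
    (hfac : ∀ ω₁ ω₂, pr p (fun ω => A ω = A ω₁ ∧ U ω = U ω₂) = G ω₁ * H ω₂) :
    ∃ (g : α → ℝ) (h : υ → ℝ), (∀ a, 0 ≤ g a) ∧ (∀ u, 0 ≤ h u) ∧
      ∀ a u, pr p (fun ω => A ω = a ∧ U ω = u) = g a * h u := by
  refine ⟨fun a => if ha : ∃ ω, A ω = a then G ha.choose else 0,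
    fun u => if hu : ∃ ω, U ω = u then H hu.choose else 0,
    fun a => by dsimp only; split <;> simp [hG], fun u => by dsimp only; split <;> simp [hH],
    fun a u => ?_⟩
  dsimp only
  by_cases ha : ∃ ω, A ω = a
  · by_cases hu : ∃ ω, U ω = u
    · rw [dif_pos ha, dif_pos hu, ← hfac, ha.choose_spec, hu.choose_spec]
    · rw [dif_neg hu, mul_zero]
      exact pr_eq_zero_of_forall_not fun ω hω => hu ⟨ω, hω.2⟩
  · rw [dif_neg ha, zero_mul]
    exact pr_eq_zero_of_forall_not fun ω hω => ha ⟨ω, hω.1⟩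

variable {α β γ υ : Type} [Fintype α] [Fintype β] [Fintype γ] [Fintype υ]

lemma condMI_eq_zero_of_factor (A : Ω → α) (B : Ω → β) (C : Ω → γ)
    (f : α → γ → ℝ) (g : β → γ → ℝ) (hf : ∀ a c, 0 ≤ f a c) (hg : ∀ b c, 0 ≤ g b c)
    (hfac : ∀ a b c, pr p (fun ω => A ω = a ∧ B ω = b ∧ C ω = c) = f a c * g b c) :
    condMI p A B C = 0 := by
  have hAC : ∀ a c, pr p (fun ω => A ω = a ∧ C ω = c) = f a c * ∑ b, g b c := by
    intro a c
    rw [pr_eq_sum_pr_and_eq _ B, Finset.mul_sum]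
    exact Finset.sum_congr rfl fun b _ => (pr_congr fun ω => by tauto).trans (hfac a b c)
  have hBC : ∀ b c, pr p (fun ω => B ω = b ∧ C ω = c) = (∑ a, f a c) * g b c := by
    intro b c
    rw [pr_eq_sum_pr_and_eq _ A, Finset.sum_mul]
    exact Finset.sum_congr rfl fun a _ => (pr_congr fun ω => by tauto).trans (hfac a b c)
  have hC : ∀ c, pr p (fun ω => C ω = c) = (∑ a, f a c) * ∑ b, g b c := by
    intro c
    rw [pr_eq_sum_pr_and_eq _ A, Finset.sum_mul]
    exact Finset.sum_congr rfl fun a _ => (pr_congr fun ω => by tauto).trans (hAC a c)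
  refine Finset.sum_eq_zero fun a _ => Finset.sum_eq_zero fun b _ =>
    Finset.sum_eq_zero fun c _ => ?_
  rw [hfac, hAC, hBC, hC]
  rcases (mul_nonneg (hf a c) (hg b c)).eq_or_lt with h0 | hpos
  · rw [← h0, zero_mul]
  · have ha : 0 < f a c := pos_of_mul_pos_left hpos (hg b c)
    have hb : 0 < g b c := pos_of_mul_pos_right hpos (hf a c)
    have hsa : 0 < ∑ a', f a' c :=
      ha.trans_le (Finset.single_le_sum (fun a' _ => hf a' c) (Finset.mem_univ a))
    have hsb : 0 < ∑ b', g b' c :=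
      hb.trans_le (Finset.single_le_sum (fun b' _ => hg b' c) (Finset.mem_univ b))
    have hratio : (∑ a', f a' c) * (∑ b', g b' c) * (f a c * g b c) /
        (f a c * (∑ b', g b' c) * ((∑ a', f a' c) * g b c)) = 1 := by
      field_simp
    rw [hratio, Real.logb_one, mul_zero]

theorem condMI_eq_zero_of_indep_of_level_sets
    (A : Ω → α) (U : Ω → υ) (π : υ → β) (C : Ω → γ) (G H : Ω → ℝ)
    (hG : ∀ ω, 0 ≤ G ω) (hH : ∀ ω, 0 ≤ H ω)
    (hfac : ∀ ω₁ ω₂, pr p (fun ω => A ω = A ω₁ ∧ U ω = U ω₂) = G ω₁ * H ω₂)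
    (P Q : Ω → γ → Prop) (hP : ∀ ω ω' c, A ω = A ω' → P ω c → P ω' c)
    (hQ : ∀ ω ω' c, U ω = U ω' → Q ω c → Q ω' c) (hC : ∀ ω c, C ω = c ↔ P ω c ∧ Q ω c) :
    condMI p A (fun ω => π (U ω)) C = 0 := by
  obtain ⟨g, h, hg, hh, hind⟩ := exists_factor_of_witness A U G H hG hH hfac
  let φ : α → γ → Prop := fun a c => ∃ ω, A ω = a ∧ P ω c
  let ψ : υ → γ → Prop := fun u c => ∃ ω, U ω = u ∧ Q ω c
  refine condMI_eq_zero_of_factor A _ C (fun a c => if φ a c then g a else 0)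
    (fun b c => ∑ u, if π u = b ∧ ψ u c then h u else 0)
    (fun a c => by split <;> simp [hg])
    (fun b c => Finset.sum_nonneg fun u _ => by split <;> simp [hh]) fun a b c => ?_
  rw [pr_eq_sum_pr_and_eq _ U, Finset.mul_sum]
  refine Finset.sum_congr rfl fun u _ => ?_
  have hev : ∀ ω, ((A ω = a ∧ π (U ω) = b ∧ C ω = c) ∧ U ω = u) ↔
      (A ω = a ∧ U ω = u) ∧ (φ a c ∧ π u = b ∧ ψ u c) := by
    intro ω
    constructor
    · rintro ⟨⟨rfl, hb, hc⟩, rfl⟩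
      obtain ⟨hPω, hQω⟩ := (hC ω c).1 hc
      exact ⟨⟨rfl, rfl⟩, ⟨ω, rfl, hPω⟩, hb, ⟨ω, rfl, hQω⟩⟩
    · rintro ⟨⟨rfl, rfl⟩, ⟨ω₁, ha₁, hP₁⟩, hb, ⟨ω₂, hu₂, hQ₂⟩⟩
      exact ⟨⟨rfl, hb, (hC ω c).2 ⟨hP ω₁ ω c ha₁ hP₁, hQ ω₂ ω c hu₂ hQ₂⟩⟩, rfl⟩
  rw [pr_congr hev, pr_and_const, hind]
  by_cases hφ : φ a c <;> by_cases hψ : π u = b ∧ ψ u c <;> simp [hφ, hψ]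

end Probability

section Chain

variable {S : Type}

/-- The state at the start of pass `r`, given the initial state `m₀` and the states `c q`
reached at the right end of the middle block in the earlier passes `q`; `Rt q` runs pass `q`
from there to the end of the stream. -/
def passStart {i i' : ℕ} (h : i ≤ i' + 1) (Rt : ℕ → S → S) (m₀ : S) (c : Fin i' → S) :
    Fin i → S
  | ⟨0, _⟩ => m₀
  | ⟨q + 1, hq⟩ => Rt q (c ⟨q, by omega⟩)

/-- Pass `r` runs `L r` up to the middle block, `I r` through it and `Rt r` to the end. -/
theorem boundary_states_iff (L I Rt : ℕ → S → S) (pe : ℕ → S)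
    (hpe : ∀ r, pe (r + 1) = Rt r (I r (L r (pe r)))) {i i' : ℕ} (h₁ : i' ≤ i)
    (h₂ : i ≤ i' + 1) (c₁ : Fin i → S) (c₂ : Fin i' → S) :
    ((∀ r : Fin i, L r (pe r) = c₁ r) ∧ ∀ r : Fin i', I r (L r (pe r)) = c₂ r) ↔
      (∀ r : Fin i', I r (c₁ (Fin.castLE h₁ r)) = c₂ r) ∧
        ∀ r : Fin i, L r (passStart h₂ Rt (pe 0) c₂ r) = c₁ r := by
  constructor
  · rintro ⟨hL, hI⟩
    refine ⟨fun r => by rw [← hI r, ← hL]; rfl, ?_⟩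
    rintro ⟨_ | q, hq⟩
    · exact hL ⟨0, hq⟩
    · show L (q + 1) (Rt q (c₂ ⟨q, _⟩)) = c₁ ⟨q + 1, hq⟩
      rw [← hI ⟨q, by omega⟩, ← hpe]
      exact hL ⟨q + 1, hq⟩
  · rintro ⟨hI, hL⟩
    have hstart : ∀ r : Fin i, pe r = passStart h₂ Rt (pe 0) c₂ r := by
      rintro ⟨r, hr⟩
      induction r with
      | zero => rfl
      | succ q ih =>
        show pe (q + 1) = Rt q (c₂ ⟨q, _⟩)
        rw [hpe, ih (by omega), hL ⟨q, by omega⟩, ← hI ⟨q, by omega⟩]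
        rfl
    refine ⟨fun r => by rw [hstart, hL], fun r => ?_⟩
    rw [← hI r, ← hL (Fin.castLE h₁ r), ← hstart]
    rfl

end Chain

section Streaming

variable {Ω : Type} [Fintype Ω] {p : Ω → ℝ} {𝒳 : Type} [Fintype 𝒳] {n k : ℕ}
  {X : ℕ → Ω → 𝒳} (M : Alg Ω p 𝒳 n k X)

def Alg.step (i q : ℕ) (ω : Ω) (s : M.S) : M.S :=
  if q < n ∧ i < k then M.f i q (X q ω) s (M.R i q ω) else s

def Alg.segment (i : ℕ) (ω : Ω) (a b : ℕ) (s : M.S) : M.S :=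
  (List.range' a (b - a)).foldl (fun s q => M.step i q ω s) s

lemma Alg.runPass_eq_segment (i : ℕ) (ini : Ω → M.S) (q : ℕ) (ω : Ω) :
    M.runPass i ini q ω = M.segment i ω 0 q (ini ω) := by
  induction q with
  | zero => rfl
  | succ q ih =>
    simp only [Alg.segment, Nat.sub_zero, List.range'_concat, List.foldl_append,
      List.foldl_cons, List.foldl_nil, Nat.zero_add, Nat.one_mul] at ih ⊢
    rw [← ih]
    rfl

lemma Alg.segment_segment (i : ℕ) (ω : Ω) {a b c : ℕ} (hab : a ≤ b) (hbc : b ≤ c) (s : M.S) :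
    M.segment i ω b c (M.segment i ω a b s) = M.segment i ω a c s := by
  obtain ⟨b, rfl⟩ := Nat.exists_eq_add_of_le hab
  obtain ⟨c, rfl⟩ := Nat.exists_eq_add_of_le hbc
  rw [Alg.segment, Alg.segment, Alg.segment, ← List.foldl_append, Nat.add_sub_cancel_left,
    Nat.add_sub_cancel_left, show a + b + c - a = b + c by omega, List.range'_append_1]

lemma Alg.st_succ {l j : ℕ} (hlj : l ≤ j) (r : ℕ) (ω : Ω) :
    M.st r (j + 1) ω = M.segment r ω l (j + 1) (M.st r l ω) := by
  rw [Alg.st, Alg.st, M.runPass_eq_segment, M.runPass_eq_segment,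
    M.segment_segment r ω (Nat.zero_le l) (by omega)]

def Alg.AgreeOn (T : Finset ℕ) (ω ω' : Ω) : Prop :=
  ∀ q ∈ T, X q ω = X q ω' ∧ ∀ i < k, M.R i q ω = M.R i q ω'

lemma Alg.segment_congr {T : Finset ℕ} {ω ω' : Ω} (h : M.AgreeOn T ω ω') {a b : ℕ}
    (hT : ∀ q, a ≤ q → q < b → q < n → q ∈ T) (i : ℕ) :
    M.segment i ω a b = M.segment i ω' a b := by
  funext s
  refine List.foldl_ext _ _ _ fun s q hq => ?_
  obtain ⟨t, ht, rfl⟩ := List.mem_range'.1 hq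
  simp only [Alg.step]
  split_ifs with hqi
  · obtain ⟨hX, hR⟩ := h _ (hT _ (by omega) (by omega) hqi.1)
    rw [hX, hR i hqi.2]
  · rfl

def Alg.colProb (T : Finset ℕ) (ω : Ω) : ℝ :=
  ∏ q ∈ T, (pr p (fun ω' => X q ω' = X q ω) *
    ∏ i ∈ range k, pr p (fun ω' => M.R i q ω' = M.R i q ω))

lemma Alg.colProb_nonneg (hp : ∀ ω, 0 ≤ p ω) (T : Finset ℕ) (ω : Ω) : 0 ≤ M.colProb T ω :=
  Finset.prod_nonneg fun _ _ => mul_nonneg (pr_nonneg hp _)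
    (Finset.prod_nonneg fun _ _ => pr_nonneg hp _)

theorem Alg.pr_agreeOn_agreeOn_sdiff (hprod : IsProduct p n X) {T : Finset ℕ}
    (hT : T ⊆ range n) (ω₁ ω₂ : Ω) :
    pr p (fun ω => M.AgreeOn T ω ω₁ ∧ M.AgreeOn (range n \ T) ω ω₂ ∧ M.init ω = M.init ω₂) =
      M.colProb T ω₁ * (pr p (fun ω => M.init ω = M.init ω₂) * M.colProb (range n \ T) ω₂) := by
  let x : ℕ → 𝒳 := fun q => if q ∈ T then X q ω₁ else X q ω₂
  let r : ℕ → ℕ → M.Rv := fun i q => if q ∈ T then M.R i q ω₁ else M.R i q ω₂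
  have hev : ∀ ω, (M.AgreeOn T ω ω₁ ∧ M.AgreeOn (range n \ T) ω ω₂ ∧ M.init ω = M.init ω₂) ↔
      M.init ω = M.init ω₂ ∧ (∀ i < k, ∀ q < n, M.R i q ω = r i q) ∧ ∀ q < n, X q ω = x q := by
    intro ω
    constructor
    · rintro ⟨h₁, h₂, hinit⟩
      refine ⟨hinit, fun i hi q hq => ?_, fun q hq => ?_⟩ <;> by_cases hqT : q ∈ T
      · simpa [r, hqT] using (h₁ q hqT).2 i hi
      · simpa [r, hqT] using (h₂ q (by simp [hq, hqT])).2 i hi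
      · simpa [x, hqT] using (h₁ q hqT).1
      · simpa [x, hqT] using (h₂ q (by simp [hq, hqT])).1
    · rintro ⟨hinit, hR, hX⟩
      refine ⟨fun q hq => ⟨?_, fun i hi => ?_⟩, fun q hq => ⟨?_, fun i hi => ?_⟩, hinit⟩
      · simpa [x, hq] using hX q (mem_range.1 (hT hq))
      · simpa [r, hq] using hR i hi q (mem_range.1 (hT hq))
      · obtain ⟨hqn, hqT⟩ := mem_sdiff.1 hq
        simpa [x, hqT] using hX q (mem_range.1 hqn)
      · obtain ⟨hqn, hqT⟩ := mem_sdiff.1 hq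
        simpa [r, hqT] using hR i hi q (mem_range.1 hqn)
  let F : ℕ → ℝ := fun q =>
    pr p (fun ω => X q ω = x q) * ∏ i ∈ range k, pr p (fun ω => M.R i q ω = r i q)
  have hcols : (∏ i ∈ range k, ∏ q ∈ range n, pr p (fun ω => M.R i q ω = r i q)) *
      ∏ q ∈ range n, pr p (fun ω => X q ω = x q) = ∏ q ∈ range n, F q := by
    rw [Finset.prod_comm, mul_comm, ← Finset.prod_mul_distrib]
  have hin : ∏ q ∈ T, F q = M.colProb T ω₁ :=
    Finset.prod_congr rfl fun q hq => by simp [F, x, r, hq]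
  have hout : ∏ q ∈ range n \ T, F q = M.colProb (range n \ T) ω₂ :=
    Finset.prod_congr rfl fun q hq => by simp [F, x, r, (mem_sdiff.1 hq).2]
  rw [pr_congr hev, M.indep, hprod, mul_assoc, hcols, ← Finset.prod_sdiff hT, hin, hout]
  ring

def Alg.blockData (l j : ℕ) (ω : Ω) :
    (Fin (j - l + 1) → 𝒳) × (Fin k → Fin (j - l + 1) → M.Rv) :=
  ((fun r => X (l + r.1) ω), (fun i r => M.R i.1 (l + r.1) ω))

def Alg.outerData (l j : ℕ) (ω : Ω) :
    (Fin l → 𝒳) × (Fin k → Fin l → M.Rv) × (Fin (n - (j + 1)) → 𝒳) ×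
      (Fin k → Fin (n - (j + 1)) → M.Rv) :=
  ((fun r => X r.1 ω), (fun i r => M.R i.1 r.1 ω), (fun r => X (j + 1 + r.1) ω),
    (fun i r => M.R i.1 (j + 1 + r.1) ω))

lemma Alg.blockData_eq_iff {l j : ℕ} (hlj : l ≤ j) (ω ω' : Ω) :
    M.blockData l j ω = M.blockData l j ω' ↔ M.AgreeOn (Icc l j) ω ω' := by
  simp only [Alg.blockData, Prod.ext_iff, funext_iff, Fin.forall_iff, Alg.AgreeOn, mem_Icc]
  constructor
  · rintro ⟨hX, hR⟩ q ⟨hlq, hqj⟩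
    obtain ⟨t, rfl⟩ := Nat.exists_eq_add_of_le hlq
    exact ⟨hX t (by omega), fun i hi => hR i hi t (by omega)⟩
  · intro h
    exact ⟨fun t ht => (h (l + t) ⟨by omega, by omega⟩).1,
      fun i hi t ht => (h (l + t) ⟨by omega, by omega⟩).2 i hi⟩

lemma Alg.outerData_eq_iff {l j : ℕ} (hln : l ≤ n) (ω ω' : Ω) :
    M.outerData l j ω = M.outerData l j ω' ↔ M.AgreeOn (range n \ Icc l j) ω ω' := by
  simp only [Alg.outerData, Prod.ext_iff, funext_iff, Fin.forall_iff, Alg.AgreeOn, mem_sdiff,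
    mem_range, mem_Icc]
  constructor
  · rintro ⟨hX₁, hR₁, hX₂, hR₂⟩ q ⟨hqn, hq⟩
    by_cases hql : q < l
    · exact ⟨hX₁ q hql, fun i hi => hR₁ i hi q hql⟩
    · obtain ⟨t, rfl⟩ := Nat.exists_eq_add_of_le (show j + 1 ≤ q by omega)
      exact ⟨hX₂ t (by omega), fun i hi => hR₂ i hi t (by omega)⟩
  · intro h
    exact ⟨fun t ht => (h t ⟨by omega, by omega⟩).1,
      fun i hi t ht => (h t ⟨by omega, by omega⟩).2 i hi,
      fun t ht => (h (j + 1 + t) ⟨by omega, by omega⟩).1,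
      fun i hi t ht => (h (j + 1 + t) ⟨by omega, by omega⟩).2 i hi⟩

lemma Alg.passEnd_succ {l j : ℕ} (hlj : l ≤ j) (hjn : j < n) (r : ℕ) (ω : Ω) :
    M.passEnd (r + 1) ω = M.segment r ω (j + 1) n
      (M.segment r ω l (j + 1) (M.segment r ω 0 l (M.passEnd r ω))) := by
  rw [M.segment_segment r ω (Nat.zero_le l) (by omega),
    M.segment_segment r ω (Nat.zero_le _) hjn]
  exact M.runPass_eq_segment r (M.passEnd r) n ω

lemma Alg.boundary_states_eq_iff {i i' l j : ℕ} (h₁ : i' ≤ i) (h₂ : i ≤ i' + 1) (hlj : l ≤ j)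
    (hjn : j < n) (ω : Ω) (c : (Fin i → M.S) × (Fin i' → M.S)) :
    ((fun r : Fin i => M.st r.1 l ω), (fun r : Fin i' => M.st r.1 (j + 1) ω)) = c ↔
      (∀ r : Fin i', M.segment r ω l (j + 1) (c.1 (Fin.castLE h₁ r)) = c.2 r) ∧
        ∀ r : Fin i, M.segment r ω 0 l
          (passStart h₂ (fun q => M.segment q ω (j + 1) n) (M.init ω) c.2 r) = c.1 r := by
  simp only [Prod.ext_iff, funext_iff, M.st_succ hlj]
  simp only [Alg.st, Alg.runPass_eq_segment]
  exact boundary_states_iff (fun r => M.segment r ω 0 l) (fun r => M.segment r ω l (j + 1))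
    (fun r => M.segment r ω (j + 1) n) (fun r => M.passEnd r ω) (M.passEnd_succ hlj hjn · ω)
    h₁ h₂ c.1 c.2

theorem Alg.condMI_blockData_outerData_eq_zero (hp : ∀ ω, 0 ≤ p ω) (hprod : IsProduct p n X)
    {i i' l j : ℕ} (h₁ : i' ≤ i) (h₂ : i ≤ i' + 1) (hlj : l ≤ j) (hjn : j < n) :
    condMI p (M.blockData l j) (M.outerData l j)
      (fun ω => ((fun r : Fin i => M.st r.1 l ω), (fun r : Fin i' => M.st r.1 (j + 1) ω))) =
      0 := by
  have hin : ∀ q, l ≤ q → q < j + 1 → q < n → q ∈ Icc l j := fun q h h' _ =>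
    mem_Icc.2 ⟨h, by omega⟩
  have hleft : ∀ q, 0 ≤ q → q < l → q < n → q ∈ range n \ Icc l j := fun q _ h h' => by
    simp only [mem_sdiff, mem_range, mem_Icc]; omega
  have hright : ∀ q, j + 1 ≤ q → q < n → q < n → q ∈ range n \ Icc l j := fun q h h' _ => by
    simp only [mem_sdiff, mem_range, mem_Icc]; omega
  refine condMI_eq_zero_of_indep_of_level_sets (M.blockData l j)
    (fun ω => (M.outerData l j ω, M.init ω)) Prod.fst _ (M.colProb (Icc l j))
    (fun ω => pr p (fun ω' => M.init ω' = M.init ω) * M.colProb (range n \ Icc l j) ω)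
    (M.colProb_nonneg hp _) (fun ω => mul_nonneg (pr_nonneg hp _) (M.colProb_nonneg hp _ ω))
    (fun ω₁ ω₂ => ?_) _ _ (fun ω ω' c h hP r => ?_) (fun ω ω' c h hQ r => ?_)
    (M.boundary_states_eq_iff h₁ h₂ hlj hjn)
  · rw [← M.pr_agreeOn_agreeOn_sdiff hprod (fun q hq => by simp at hq ⊢; omega) ω₁ ω₂]
    exact pr_congr fun ω => by
      rw [M.blockData_eq_iff hlj, Prod.ext_iff, M.outerData_eq_iff (by omega)]
  · rw [← M.segment_congr ((M.blockData_eq_iff hlj ω ω').1 h) hin]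
    exact hP r
  · obtain ⟨hout, hinit⟩ := Prod.mk.inj h
    have hag := (M.outerData_eq_iff (by omega) ω ω').1 hout
    have hRt : (fun q => M.segment q ω (j + 1) n) = fun q => M.segment q ω' (j + 1) n :=
      funext (M.segment_congr hag hright)
    rw [← M.segment_congr hag hleft, ← hRt, ← hinit]
    exact hQ r

end Streaming

/-- Claim `micindependence`: for a `k`-pass streaming algorithm on a
product distribution, for all `i ∈ {1,…,k}` and `j, ℓ ∈ [n]` with `ℓ ≤ j`:
(1) `I(X_{[ℓ,j]}, R_{(≤k,[ℓ,j])}; X_{[1,ℓ-1]}, R_{(≤k,[1,ℓ-1])}, X_{[j+1,n]}, R_{(≤k,[j+1,n])}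
      | M_{(≤i,ℓ-1)}, M_{(≤i-1,j)}) = 0`, and
(2) the same with conditioning `(M_{(≤i,ℓ-1)}, M_{(≤i,j)})`.
Here `l` and `j` below are the 0-shifted versions of the paper's `ℓ` and `j`
(so `l ≤ j < n` corresponds to `1 ≤ ℓ ≤ j ≤ n`); `X_{[ℓ,j]}` consists of the `j - l + 1`
entries `X (l+r)`, and `M_{(r,q)}` is `M.st (r-1) q`. -/
theorem mic_block_independence
    {Ω : Type} [Fintype Ω] {p : Ω → ℝ} {𝒳 : Type} [Fintype 𝒳] {n k : ℕ}
    {X : ℕ → Ω → 𝒳}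
    (hp : IsPMF p) (hprod : IsProduct p n X)
    (M : Alg Ω p 𝒳 n k X) :
    ∀ i : ℕ, 1 ≤ i → i ≤ k → ∀ l j : ℕ, l ≤ j → j < n →
      (condMI p
        (fun ω => ((fun r : Fin (j - l + 1) => X (l + r.1) ω),
                   (fun (i' : Fin k) (r : Fin (j - l + 1)) => M.R i'.1 (l + r.1) ω)))
        (fun ω => ((fun r : Fin l => X r.1 ω),
                   (fun (i' : Fin k) (r : Fin l) => M.R i'.1 r.1 ω),
                   (fun r : Fin (n - (j + 1)) => X (j + 1 + r.1) ω),
                   (fun (i' : Fin k) (r : Fin (n - (j + 1))) => M.R i'.1 (j + 1 + r.1) ω)))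
        (fun ω => ((fun r : Fin i => M.st r.1 l ω),
                   (fun r : Fin (i - 1) => M.st r.1 (j + 1) ω))) = 0)
      ∧ (condMI p
        (fun ω => ((fun r : Fin (j - l + 1) => X (l + r.1) ω),
                   (fun (i' : Fin k) (r : Fin (j - l + 1)) => M.R i'.1 (l + r.1) ω)))
        (fun ω => ((fun r : Fin l => X r.1 ω),
                   (fun (i' : Fin k) (r : Fin l) => M.R i'.1 r.1 ω),
                   (fun r : Fin (n - (j + 1)) => X (j + 1 + r.1) ω),
                   (fun (i' : Fin k) (r : Fin (n - (j + 1))) => M.R i'.1 (j + 1 + r.1) ω)))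
        (fun ω => ((fun r : Fin i => M.st r.1 l ω),
                   (fun r : Fin i => M.st r.1 (j + 1) ω))) = 0) := by
  intro i hi _ l j hlj hjn
  exact ⟨M.condMI_blockData_outerData_eq_zero hp.nonneg hprod (by omega) (by omega) hlj hjn,
    M.condMI_blockData_outerData_eq_zero hp.nonneg hprod le_rfl (by omega) hlj hjn⟩

end MultiPassIC
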